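/- arXiv:2404.03464 — 7 statements merged into one kernel-verified Lean document; each statement's English description precedes it below -/
import Mathlib

section
/- A sequence (a_n) of non-negative integers is realizable (i.e., there exists a set X and a map T : X → X with a_n = #{x ∈ X : T^n x = x} for all n ≥ 1, with all these fixed-point counts finite) if and only if for all n ≥ 1, both n divides ∑_{d|n} μ(n/d) a_d and ∑_{d|n} μ(n/d) a_d ≥ 0, where μ is the Möbius function. -/
/-- A sequence `a : ℕ → ℕ` (indexed from 1) is realizable if there is a set `X`
and a map `T : X → X` such that for every `n ≥ 1` the set of points fixed by the
`n`-th iterate of `T` is finite with cardinality `a n`. -/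
def IsRealizable (a : ℕ → ℕ) : Prop :=
  ∃ (X : Type) (T : X → X), ∀ n : ℕ, 1 ≤ n →
    {x : X | T^[n] x = x}.Finite ∧ {x : X | T^[n] x = x}.ncard = a n

/-- The Möbius-transformed sum `∑_{d ∣ n} μ(n/d) a_d`. -/
def doldSum (a : ℕ → ℕ) (n : ℕ) : ℤ :=
  ∑ d ∈ n.divisors, (ArithmeticFunction.moebius (n / d) : ℤ) * (a d : ℤ)

/-!
The fixed points of `Tⁿ` are the points whose minimal period divides `n`, so `a n` is the sum
over `d ∣ n` of the number of points of minimal period `d`, and Möbius inversion identifies the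
Dold sum `doldSum a n` with the number of points of minimal period exactly `n`. That number is
non-negative and divisible by `n`, since `ZMod n` acts freely on these points through the
iterates of `T`. Conversely, if `doldSum a n = c n * n` with `c n ≥ 0`, then the disjoint union
of `c n` cycles of length `n`, over all `n`, realizes `a`.
-/

theorem sum_divisors_eq_iff_doldSum_eq {a : ℕ → ℕ} {b : ℕ → ℤ} :
    (∀ n > 0, ∑ d ∈ n.divisors, b d = a n) ↔ ∀ n > 0, doldSum a n = b n := by
  rw [ArithmeticFunction.sum_eq_iff_sum_mul_moebius_eq]
  simp only [Int.cast_id]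
  refine forall₂_congr fun n _ => ?_
  rw [doldSum, Nat.sum_divisorsAntidiagonal' fun i j => (ArithmeticFunction.moebius i : ℤ) * a j]

namespace Function

variable {α : Type*} (f : α → α)

theorem sum_ncard_minimalPeriod_eq_ncard_isPeriodicPt {n : ℕ} (hn : n ≠ 0)
    (hfin : {x | IsPeriodicPt f n x}.Finite) :
    ∑ d ∈ n.divisors, {x | minimalPeriod f x = d}.ncard = {x | IsPeriodicPt f n x}.ncard := by
  classical
  have hmaps : ∀ x ∈ hfin.toFinset, minimalPeriod f x ∈ n.divisors := fun x hx =>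
    Nat.mem_divisors.2 ⟨(hfin.mem_toFinset.1 hx).minimalPeriod_dvd, hn⟩
  rw [Set.ncard_eq_toFinset_card _ hfin, Finset.card_eq_sum_card_fiberwise hmaps]
  refine Finset.sum_congr rfl fun d hd => ?_
  rw [← Set.ncard_coe_finset]
  congr
  ext x
  simp only [Finset.filter_val, Multiset.mem_filter, Finset.mem_val, Set.Finite.mem_toFinset,
    Set.mem_ofPred_eq, iff_and_self]
  rintro rfl
  exact (isPeriodicPt_minimalPeriod f x).trans_dvd (Nat.dvd_of_mem_divisors hd)

instance minimalPeriodAddAction (n : ℕ) [NeZero n] :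
    AddAction (ZMod n) {x // minimalPeriod f x = n} where
  vadd k x := ⟨f^[k.val] x, by
    rw [minimalPeriod_apply_iterate
      (minimalPeriod_pos_iff_mem_periodicPts.1 (by rw [x.2]; exact NeZero.pos n)), x.2]⟩
  zero_vadd x := Subtype.ext <| by
    change f^[(0 : ZMod n).val] x = x
    rw [ZMod.val_zero, iterate_zero_apply]
  add_vadd j k x := Subtype.ext <| by
    change f^[(j + k).val] x = f^[j.val] (f^[k.val] x)
    have h := iterate_mod_minimalPeriod_eq (f := f) (x := x.1) (n := j.val + k.val)
    rwa [x.2, iterate_add_apply, ← ZMod.val_add] at h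

theorem dvd_card_minimalPeriod_eq (n : ℕ) [NeZero n] :
    n ∣ Nat.card {x // minimalPeriod f x = n} := by
  have hfree : ∀ x : {x // minimalPeriod f x = n}, AddAction.stabilizer (ZMod n) x = ⊥ := by
    intro x
    ext k
    rw [AddAction.mem_stabilizer_iff, AddSubgroup.mem_bot, Subtype.ext_iff]
    change IsPeriodicPt f k.val x ↔ k = 0
    rw [isPeriodicPt_iff_minimalPeriod_dvd, x.2, ← ZMod.natCast_eq_zero_iff, ZMod.natCast_zmod_val]
  rw [Nat.card_congr (AddAction.selfEquivOrbitsQuotientProd hfree), Nat.card_prod, Nat.card_zmod]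
  exact dvd_mul_left _ _

end Function

theorem doldSum_eq_ncard_minimalPeriod_eq {α : Type*} {f : α → α} {a : ℕ → ℕ}
    (ha : ∀ n > 0, {x | f^[n] x = x}.Finite ∧ {x | f^[n] x = x}.ncard = a n)
    {n : ℕ} (hn : 0 < n) : doldSum a n = {x | Function.minimalPeriod f x = n}.ncard := by
  refine (sum_divisors_eq_iff_doldSum_eq
    (b := fun d => {x | Function.minimalPeriod f x = d}.ncard)).1 (fun m hm => ?_) n hn
  rw [← (ha m hm).2]
  exact_mod_cast Function.sum_ncard_minimalPeriod_eq_ncard_isPeriodicPt f hm.ne' (ha m hm).1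

/-- `c n` disjoint cycles of length `n` for every `n`. Since `ZMod 0 = ℤ`, the `n = 0` part
consists of aperiodic orbits and contributes no periodic points. -/
abbrev CycleSystem (c : ℕ → ℕ) : Type := Σ n : ℕ, Fin (c n) × ZMod n

namespace CycleSystem

variable {c : ℕ → ℕ}

def rotate (x : CycleSystem c) : CycleSystem c := ⟨x.1, x.2.1, x.2.2 + 1⟩

theorem rotate_iterate (m : ℕ) (x : CycleSystem c) :
    rotate^[m] x = ⟨x.1, x.2.1, x.2.2 + m⟩ := by
  induction m with
  | zero => simp
  | succ m ih => rw [Function.iterate_succ_apply', ih, rotate, Nat.cast_succ, add_assoc]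

theorem isPeriodicPt_rotate_iff {m : ℕ} {x : CycleSystem c} :
    Function.IsPeriodicPt rotate m x ↔ x.1 ∣ m := by
  obtain ⟨n, i, z⟩ := x
  rw [Function.IsPeriodicPt, Function.IsFixedPt, rotate_iterate, ← ZMod.natCast_eq_zero_iff]
  simp

def isPeriodicPtRotateEquiv {m : ℕ} (hm : m ≠ 0) :
    {x : CycleSystem c // Function.IsPeriodicPt rotate m x} ≃
      Σ d : m.divisors, Fin (c d) × ZMod d :=
  (Equiv.subtypeEquivRight fun _ => by
    rw [isPeriodicPt_rotate_iff, Nat.mem_divisors, and_iff_left hm]).trans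
    (Equiv.subtypeSigmaEquiv _ (· ∈ m.divisors))

theorem finite_and_card_isPeriodicPt_rotate {m : ℕ} (hm : m ≠ 0) :
    Finite {x : CycleSystem c // Function.IsPeriodicPt rotate m x} ∧
      Nat.card {x : CycleSystem c // Function.IsPeriodicPt rotate m x} =
        ∑ d ∈ m.divisors, c d * d := by
  have (d : m.divisors) : Finite (ZMod d) :=
    Nat.finite_of_card_ne_zero (by rw [Nat.card_zmod]; exact (Nat.pos_of_mem_divisors d.2).ne')
  rw [(isPeriodicPtRotateEquiv hm).finite_iff, Nat.card_congr (isPeriodicPtRotateEquiv hm),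
    Nat.card_sigma, ← Finset.sum_coe_sort m.divisors]
  exact ⟨inferInstance, by simp⟩

end CycleSystem

theorem isRealizable_of_doldSum_eq_mul {a c : ℕ → ℕ} (hc : ∀ n > 0, doldSum a n = c n * n) :
    IsRealizable a := by
  have hsum := (sum_divisors_eq_iff_doldSum_eq (b := fun d => (c d * d : ℕ))).2 fun n hn => by
    rw [hc n hn]
    push_cast
    rfl
  refine ⟨CycleSystem c, CycleSystem.rotate, fun n hn => ?_⟩
  obtain ⟨hfin, hcard⟩ := CycleSystem.finite_and_card_isPeriodicPt_rotate (c := c) (Nat.one_le_iff_ne_zero.1 hn)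
  refine ⟨hfin, ?_⟩
  rw [← Nat.card_coe_set_eq]
  exact_mod_cast hcard.trans (by exact_mod_cast hsum n hn)

theorem realizable_iff_dold_and_sign (a : ℕ → ℕ) :
    IsRealizable a ↔ ∀ n : ℕ, 1 ≤ n → (n : ℤ) ∣ doldSum a n ∧ 0 ≤ doldSum a n := by
  constructor
  · rintro ⟨X, T, hT⟩ n hn
    have : NeZero n := ⟨by omega⟩
    rw [doldSum_eq_ncard_minimalPeriod_eq hT hn, ← Nat.card_coe_set_eq]
    exact ⟨Int.natCast_dvd_natCast.2 (Function.dvd_card_minimalPeriod_eq T n),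
      Int.natCast_nonneg _⟩
  · intro h
    have (n : ℕ) : ∃ k : ℕ, 0 < n → doldSum a n = k * n := by
      by_cases hn : 0 < n
      · obtain ⟨⟨k, hk⟩, hpos⟩ := h n hn
        lift k to ℕ using nonneg_of_mul_nonneg_right (hk ▸ hpos) (by positivity)
        exact ⟨k, fun _ => by rw [hk, mul_comm]⟩
      · exact ⟨0, fun hn' => absurd hn' hn⟩
    choose c hc using this
    exact isRealizable_of_doldSum_eq_mul hc
end

section
/- For every n ≥ 1, ∑_{d|n} μ(n/d) a_d ≡ 0 (mod n), where a_n = #{x : T^n x = x} for a map T : X → X with all fixed-point sets finite. -/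
open Function Set

-- divisibility of the count of points of minimal period exactly n
lemma aux_dvd_card (X : Type) (T : X → X) (n : ℕ) (hn : 1 ≤ n)
    (hfin : {x : X | Function.minimalPeriod T x = n}.Finite) :
    n ∣ {x : X | Function.minimalPeriod T x = n}.ncard := by
  classical
  haveI : NeZero n := ⟨by omega⟩
  set B : Set X := {x : X | Function.minimalPeriod T x = n} with hB
  haveI : Fintype B := hfin.fintype
  letI G := Multiplicative (ZMod n)
  letI : SMul G B := ⟨fun g x => ⟨T^[(Multiplicative.toAdd g).val] x.1, by
    have hper : x.1 ∈ periodicPts T := by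
      rw [← Function.minimalPeriod_pos_iff_mem_periodicPts, x.2]; omega
    show Function.minimalPeriod T _ = n
    rw [Function.minimalPeriod_apply_iterate hper, x.2]⟩⟩
  letI : MulAction G B :=
    { one_smul := fun x => by
        apply Subtype.ext
        show T^[(Multiplicative.toAdd (1 : G)).val] x.1 = x.1
        simp
      mul_smul := fun g h x => by
        apply Subtype.ext
        show T^[(Multiplicative.toAdd (g * h)).val] x.1
            = T^[(Multiplicative.toAdd g).val] (T^[(Multiplicative.toAdd h).val] x.1)
        rw [← Function.iterate_add_apply, toAdd_mul, ZMod.val_add]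
        have hx := x.2
        conv_rhs => rw [← Function.iterate_mod_minimalPeriod_eq (f := T)
          (n := (Multiplicative.toAdd g).val + (Multiplicative.toAdd h).val) (x := x.1)]
        rw [hx] }
  have hstab : ∀ x : B, MulAction.stabilizer G x = ⊥ := by
    intro x
    ext g
    simp only [MulAction.mem_stabilizer_iff, Subgroup.mem_bot]
    constructor
    · intro hg
      have h1 : T^[(Multiplicative.toAdd g).val] x.1 = x.1 := congrArg Subtype.val hg
      have h2 : (Multiplicative.toAdd g).val = 0 := by
        refine Function.IsPeriodicPt.eq_zero_of_lt_minimalPeriod h1 ?_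
        rw [x.2]; exact ZMod.val_lt _
      have : Multiplicative.toAdd g = 0 := (ZMod.val_eq_zero _).mp h2
      exact toAdd_eq_zero.mp this
    · rintro rfl; apply Subtype.ext; show T^[(Multiplicative.toAdd (1:G)).val] x.1 = x.1; simp
  haveI : Fintype (MulAction.orbitRel.Quotient G B) := Fintype.ofFinite _
  haveI : ∀ ω : MulAction.orbitRel.Quotient G B, Fintype (MulAction.orbit G ω.out) :=
    fun ω => Fintype.ofFinite _
  have hcardG : Nat.card G = n := by
    rw [Nat.card_congr Multiplicative.toAdd, Nat.card_zmod]
  have horb : ∀ x : B, Nat.card (MulAction.orbit G x) = n := by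
    intro x
    rw [Nat.card_congr (MulAction.orbitEquivQuotientStabilizer G x), hstab x,
      Nat.card_congr (QuotientGroup.quotientBot (G := G)).toEquiv, hcardG]
  have hcard : Fintype.card B
      = (Fintype.card (MulAction.orbitRel.Quotient G B)) * n := by
    rw [Fintype.card_congr (MulAction.selfEquivSigmaOrbits G B), Fintype.card_sigma]
    rw [Finset.sum_congr rfl (fun ω _ => by
      rw [← Nat.card_eq_fintype_card, horb])]
    simp [Finset.sum_const, mul_comm]
  have : B.ncard = Fintype.card B := by
    rw [← Nat.card_coe_set_eq, Nat.card_eq_fintype_card]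
  rw [this, hcard]
  exact dvd_mul_left n _

theorem dold_congruence (X : Type) (T : X → X) (a : ℕ → ℕ)
    (hfin : ∀ n : ℕ, 1 ≤ n → {x : X | T^[n] x = x}.Finite)
    (ha : ∀ n : ℕ, 1 ≤ n → a n = {x : X | T^[n] x = x}.ncard) :
    ∀ n : ℕ, 1 ≤ n → (n : ℤ) ∣ doldSum a n := by
  classical
  intro n hn
  -- B d : points of minimal period exactly d
  set B : ℕ → Set X := fun d => {x : X | Function.minimalPeriod T x = d} with hBdef
  have hBfin : ∀ d : ℕ, 1 ≤ d → (B d).Finite := by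
    intro d hd
    refine (hfin d hd).subset ?_
    intro x hx
    have : Function.IsPeriodicPt T d x :=
      Function.isPeriodicPt_iff_minimalPeriod_dvd.mpr (by rw [hx])
    exact this
  -- step 1 : a m = ∑_{d | m} ncard (B d)
  have hsum : ∀ m : ℕ, 0 < m →
      ∑ d ∈ m.divisors, ((B d).ncard : ℤ) = (a m : ℤ) := by
    intro m hm
    have hsfin := hfin m hm
    set s := hsfin.toFinset with hs
    have hmem : ∀ x ∈ s, Function.minimalPeriod T x ∈ m.divisors := by
      intro x hx
      rw [Set.Finite.mem_toFinset] at hx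
      have hper : Function.IsPeriodicPt T m x := hx
      exact Nat.mem_divisors.mpr ⟨hper.minimalPeriod_dvd, hm.ne'⟩
    have hcard := Finset.card_eq_sum_card_fiberwise hmem
    have hfiber : ∀ d ∈ m.divisors,
        (s.filter fun x => Function.minimalPeriod T x = d).card = (B d).ncard := by
      intro d hd
      obtain ⟨hdvd, -⟩ := Nat.mem_divisors.mp hd
      have : B d = ↑(s.filter fun x => Function.minimalPeriod T x = d) := by
        ext x
        simp only [Finset.coe_filter, Set.mem_setOf_eq, hs, Set.Finite.mem_toFinset]
        constructor
        · intro hx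
          refine ⟨?_, hx⟩
          exact Function.isPeriodicPt_iff_minimalPeriod_dvd.mpr (by rw [hx]; exact hdvd)
        · exact fun h => h.2
      rw [this, Set.ncard_coe_finset]
    have ham : a m = s.card := by
      rw [ha m hm, Set.ncard_eq_toFinset_card _ hsfin]
    rw [ham, hcard]
    push_cast
    exact Finset.sum_congr rfl (fun d hd => by rw [← hfiber d hd])
  -- step 2 : Möbius inversion
  have hmob := (ArithmeticFunction.sum_eq_iff_sum_smul_moebius_eq
    (f := fun d => ((B d).ncard : ℤ)) (g := fun m => (a m : ℤ))).mp hsum n (by omega)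
  have hds : doldSum a n = ((B n).ncard : ℤ) := by
    rw [← hmob, doldSum, ← Nat.sum_divisorsAntidiagonal'
      (f := fun u v => (ArithmeticFunction.moebius u : ℤ) * (a v : ℤ))]
    exact Finset.sum_congr rfl (fun x _ => by rw [zsmul_eq_mul]; norm_num)
  rw [hds]
  exact_mod_cast Int.natCast_dvd_natCast.mpr (aux_dvd_card X T n hn (hBfin n hn))
end

section
/- Let (a_n) be defined by a_1 = 1, a_2 = c, and a_{n+2} = a_{n+1} + a_n for n ≥ 1, where c is a positive integer. Then (a_n) satisfies the Dold condition n | ∑_{d|n} μ(n/d) a_d for all n ≥ 1 if and only if c = 3. -/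
open Finset ArithmeticFunction ArithmeticFunction.Moebius Real goldenRatio

theorem Nat.Coprime.sum_divisors_mul_eq_sum_sum {M : Type*} [AddCommMonoid M] {m n : ℕ}
    (hmn : m.Coprime n) (f : ℕ → M) :
    ∑ d ∈ (m * n).divisors, f d = ∑ i ∈ m.divisors, ∑ j ∈ n.divisors, f (i * j) := by
  rw [Nat.divisors_mul, Finset.mul_def, sum_image hmn.mul_injOn_divisors, sum_product]

theorem sum_divisors_prime_pow_succ_moebius_mul {p : ℕ} (hp : p.Prime) (k : ℕ) (f : ℕ → ℤ) :
    ∑ d ∈ (p ^ (k + 1)).divisors, (μ (p ^ (k + 1) / d) : ℤ) * f d =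
      f (p ^ (k + 1)) - f (p ^ k) := by
  rw [Nat.sum_divisors_prime_pow hp, sum_range_succ, sum_range_succ, sum_eq_zero]
  · simp [Nat.pow_div, hp.pos, moebius_apply_prime hp, sub_eq_neg_add]
  · intro j hj
    have hj : j < k := mem_range.mp hj
    rw [Nat.pow_div (by omega) hp.pos, moebius_apply_prime_pow hp (by omega), if_neg (by omega),
      zero_mul]

theorem doldSum_prime_pow_mul {p m : ℕ} (hp : p.Prime) (hpm : ¬ p ∣ m) (b : ℕ → ℕ) (k : ℕ) :
    doldSum b (p ^ (k + 1) * m) =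
      ∑ e ∈ m.divisors, μ (m / e) * ((b (p ^ (k + 1) * e) : ℤ) - b (p ^ k * e)) := by
  have hcop : (p ^ (k + 1)).Coprime m := ((hp.coprime_iff_not_dvd).mpr hpm).pow_left _
  rw [doldSum, hcop.sum_divisors_mul_eq_sum_sum, sum_comm]
  refine sum_congr rfl fun e he => ?_
  have he : e ∣ m := Nat.dvd_of_mem_divisors he
  have hsplit : ∀ i ∈ (p ^ (k + 1)).divisors, (μ (p ^ (k + 1) * m / (i * e)) : ℤ) * b (i * e) =
      μ (m / e) * (μ (p ^ (k + 1) / i) * b (i * e)) := by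
    intro i hi
    have hi : i ∣ p ^ (k + 1) := Nat.dvd_of_mem_divisors hi
    rw [← Nat.div_mul_div_comm hi he, isMultiplicative_moebius.map_mul_of_coprime
      ((hcop.coprime_dvd_left (Nat.div_dvd_of_dvd hi)).coprime_dvd_right (Nat.div_dvd_of_dvd he))]
    ring
  rw [sum_congr rfl hsplit, ← mul_sum,
    sum_divisors_prime_pow_succ_moebius_mul hp k (fun i => (b (i * e) : ℤ))]

theorem doldSum_prime_pow {p : ℕ} (hp : p.Prime) (b : ℕ → ℕ) (k : ℕ) :
    doldSum b (p ^ (k + 1)) = b (p ^ (k + 1)) - b (p ^ k) := by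
  simpa using doldSum_prime_pow_mul hp hp.not_dvd_one b k

theorem doldSum_congr {a b : ℕ → ℕ} (h : ∀ d ≠ 0, a d = b d) (n : ℕ) :
    doldSum a n = doldSum b n :=
  sum_congr rfl fun d hd => by rw [h d (Nat.ne_of_gt (Nat.pos_of_mem_divisors hd))]

theorem Int.natCast_dvd_of_forall_prime_pow_dvd {n : ℕ} (hn : n ≠ 0) {D : ℤ}
    (h : ∀ p : ℕ, p.Prime → (p : ℤ) ^ n.factorization p ∣ D) : (n : ℤ) ∣ D := by
  rw [Int.natCast_dvd]
  rcases eq_or_ne D.natAbs 0 with hD | hD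
  · simp [hD]
  rw [← Nat.factorization_prime_le_iff_dvd hn hD]
  intro p hp
  rw [← hp.pow_dvd_iff_le_factorization hD, ← Int.natCast_dvd]
  exact_mod_cast h p hp

theorem dvd_doldSum_of_euler_congr (b : ℕ → ℕ)
    (h : ∀ p : ℕ, p.Prime → ∀ k m, (p : ℤ) ^ (k + 1) ∣ (b (p ^ (k + 1) * m) : ℤ) - b (p ^ k * m))
    (n : ℕ) : (n : ℤ) ∣ doldSum b n := by
  rcases eq_or_ne n 0 with rfl | hn
  · simp [doldSum]
  refine Int.natCast_dvd_of_forall_prime_pow_dvd hn fun p hp => ?_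
  cases hk : n.factorization p with
  | zero => simp
  | succ k =>
    have hdecomp := doldSum_prime_pow_mul hp (Nat.not_dvd_ordCompl hp hn) b k
    rw [← hk, Nat.ordProj_mul_ordCompl_eq_self, hk] at hdecomp
    rw [hdecomp]
    exact dvd_sum fun e _ => (h p hp k e).mul_left _

def lucas : ℕ → ℕ
  | 0 => 2
  | 1 => 1
  | n + 2 => lucas (n + 1) + lucas n

theorem lucas_add_two (n : ℕ) : lucas (n + 2) = lucas (n + 1) + lucas n := rfl

theorem cast_lucas {R : Type*} [CommRing R] {x y : R} (hsum : x + y = 1) (hprod : x * y = -1) :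
    ∀ n, (lucas n : R) = x ^ n + y ^ n
  | 0 => by norm_num [lucas]
  | 1 => by simp [lucas, hsum]
  | n + 2 => by
    rw [lucas_add_two, Nat.cast_add, cast_lucas hsum hprod (n + 1), cast_lucas hsum hprod n]
    linear_combination (-(x ^ (n + 1)) - y ^ (n + 1)) * hsum + (x ^ n + y ^ n) * hprod

theorem add_pow_two_mul_add_one {R : Type*} [CommSemiring R] (x y : R) (h : ℕ) :
    (x + y) ^ (2 * h + 1) = ∑ j ∈ range (h + 1),
      ((2 * h + 1).choose (h - j) : R) * (x * y) ^ (h - j) *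
        (x ^ (2 * j + 1) + y ^ (2 * j + 1)) := by
  rw [add_pow, show 2 * h + 1 + 1 = (h + 1) + (h + 1) by ring, sum_range_add,
    ← sum_range_reflect _ (h + 1), ← sum_add_distrib]
  refine sum_congr rfl fun j hj => ?_
  have hj : j ≤ h := Nat.lt_succ_iff.mp (mem_range.mp hj)
  rw [show h + 1 - 1 - j = h - j by omega,
    show 2 * h + 1 - (h - j) = (h - j) + (2 * j + 1) by omega,
    show 2 * h + 1 - (h + 1 + j) = h - j by omega,
    Nat.choose_symm_of_eq_add (show 2 * h + 1 = (h + 1 + j) + (h - j) by omega),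
    show h + 1 + j = (h - j) + (2 * j + 1) by omega]
  ring

theorem lucas_two_mul (n : ℕ) : (lucas (2 * n) : ℤ) = lucas n ^ 2 - 2 * (-1) ^ n := by
  obtain ⟨x, y, hsum, hprod⟩ : ∃ x y : ℝ, x + y = 1 ∧ x * y = -1 :=
    ⟨φ, ψ, goldenRatio_add_goldenConj, goldenRatio_mul_goldenConj⟩
  apply Int.cast_injective (α := ℝ)
  push_cast
  simp only [cast_lucas hsum hprod, ← hprod]
  ring

theorem lucas_pow_two_mul_add_one (h n : ℕ) :
    (lucas n : ℤ) ^ (2 * h + 1) = ∑ j ∈ range (h + 1),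
      ((2 * h + 1).choose (h - j) : ℤ) * (-1) ^ ((h - j) * n) * lucas ((2 * j + 1) * n) := by
  obtain ⟨x, y, hsum, hprod⟩ : ∃ x y : ℝ, x + y = 1 ∧ x * y = -1 :=
    ⟨φ, ψ, goldenRatio_add_goldenConj, goldenRatio_mul_goldenConj⟩
  apply Int.cast_injective (α := ℝ)
  push_cast
  simp only [cast_lucas hsum hprod, ← hprod, add_pow_two_mul_add_one]
  refine sum_congr rfl fun j _ => ?_
  ring

theorem pow_succ_dvd_pow_sub_pow {R : Type*} [CommRing R] {p k : ℕ} {a b : R}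
    (h : (p : R) ^ (k + 1) ∣ a - b) : (p : R) ^ (k + 2) ∣ a ^ p - b ^ p := by
  rw [← geom_sum₂_mul, pow_succ']
  exact mul_dvd_mul (dvd_geom_sum₂_self ((dvd_pow_self _ k.succ_ne_zero).trans h)) h

theorem lucas_pow_sub_lucas_mul_of_odd (h n : ℕ) :
    (lucas n : ℤ) ^ (2 * h + 1) - lucas ((2 * h + 1) * n) = ∑ j ∈ range h,
      ((2 * h + 1).choose (h - j) : ℤ) * (-1) ^ ((h - j) * n) * lucas ((2 * j + 1) * n) := by
  rw [lucas_pow_two_mul_add_one, sum_range_succ]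
  simp

theorem prime_dvd_lucas_pow_sub_lucas_mul {p : ℕ} (hp : p.Prime) (n : ℕ) :
    (p : ℤ) ∣ lucas n ^ p - lucas (p * n) := by
  rcases hp.eq_two_or_odd' with rfl | ⟨h, rfl⟩
  · rw [lucas_two_mul]
    simp
  · rw [lucas_pow_sub_lucas_mul_of_odd]
    refine dvd_sum fun j hj => dvd_mul_of_dvd_left (dvd_mul_of_dvd_left ?_ _) _
    have hj : j < h := mem_range.mp hj
    exact Int.natCast_dvd_natCast.mpr (hp.dvd_choose_self (by omega) (by omega))

theorem lucas_pow_sub_lucas_mul_congr {p : ℕ} (hp : p.Prime) {k : ℕ}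
    (ih : ∀ m, (p : ℤ) ^ (k + 1) ∣ lucas (p ^ (k + 1) * m) - lucas (p ^ k * m)) (m : ℕ) :
    (p : ℤ) ^ (k + 2) ∣ (lucas (p ^ (k + 1) * m) ^ p - lucas (p * (p ^ (k + 1) * m))) -
      (lucas (p ^ k * m) ^ p - lucas (p * (p ^ k * m))) := by
  rcases hp.eq_two_or_odd' with rfl | hodd
  · simp only [lucas_two_mul, sub_sub_cancel, ← mul_sub]
    rcases k with _ | k
    · rcases neg_one_pow_eq_or ℤ m with hm | hm <;>
        simp [pow_mul, hm]
    · have heven : ∀ i, Even (2 ^ (i + 1) * m) := fun i =>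
        (Nat.even_pow.mpr ⟨even_two, i.succ_ne_zero⟩).mul_right m
      simp [(heven _).neg_one_pow]
  · obtain ⟨h, rfl⟩ := hodd
    have hsign : ∀ i t, (-1 : ℤ) ^ ((2 * h + 1) ^ i * t) = (-1) ^ t := fun i t => by
      rw [pow_mul, (odd_two_mul_add_one h).pow.neg_one_pow]
    rw [lucas_pow_sub_lucas_mul_of_odd, lucas_pow_sub_lucas_mul_of_odd, ← sum_sub_distrib]
    refine dvd_sum fun j hj => ?_
    have hj : j < h := mem_range.mp hj
    have hchoose : ((2 * h + 1 : ℕ) : ℤ) ∣ ((2 * h + 1).choose (h - j) : ℤ) :=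
      Int.natCast_dvd_natCast.mpr (hp.dvd_choose_self (by omega) (by omega))
    simp only [Nat.mul_left_comm _ ((2 * h + 1) ^ _), hsign, ← mul_sub]
    rw [pow_succ']
    exact mul_dvd_mul (dvd_mul_of_dvd_left hchoose _) (ih _)

theorem lucas_euler_congr {p : ℕ} (hp : p.Prime) :
    ∀ k m, (p : ℤ) ^ (k + 1) ∣ lucas (p ^ (k + 1) * m) - lucas (p ^ k * m)
  | 0, m => by
    have hfermat := (Int.ModEq.pow_prime_eq_self hp (lucas m)).symm.dvd
    simpa using dvd_sub hfermat (prime_dvd_lucas_pow_sub_lucas_mul hp m)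
  | k + 1, m => by
    have hcancel : ∀ A B X Y : ℤ, A ^ p - B ^ p - ((A ^ p - X) - (B ^ p - Y)) = X - Y :=
      fun _ _ _ _ => by ring
    have h := dvd_sub (pow_succ_dvd_pow_sub_pow (lucas_euler_congr hp k m))
      (lucas_pow_sub_lucas_mul_congr hp (lucas_euler_congr hp k) m)
    rwa [hcancel, ← mul_assoc, ← mul_assoc, ← pow_succ', ← pow_succ'] at h

theorem dvd_doldSum_lucas (n : ℕ) : (n : ℤ) ∣ doldSum lucas n :=
  dvd_doldSum_of_euler_congr lucas (fun _ hp => lucas_euler_congr hp) n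

theorem Nat.even_fib_iff_three_dvd : ∀ n, Even (Nat.fib n) ↔ 3 ∣ n
  | 0 => by simp
  | 1 => by simp
  | 2 => by simp [Nat.fib_two]
  | n + 3 => by
    have hfib : Nat.fib (n + 3) = Nat.fib n + 2 * Nat.fib (n + 1) := by
      rw [Nat.fib_add_two, Nat.fib_add_two]
      ring
    rw [hfib, Nat.even_add, Nat.even_fib_iff_three_dvd n]
    simp

theorem odd_fib_two_mul_add_one_sub_fib {v : ℕ} (hv : ¬ 3 ∣ v + 1) :
    Odd ((Nat.fib (2 * v + 1) : ℤ) - Nat.fib v) := by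
  simp only [Int.odd_sub, Int.odd_coe_nat, Int.even_coe_nat, ← Nat.not_even_iff_odd,
    Nat.even_fib_iff_three_dvd]
  obtain h | h | h : v % 3 = 0 ∨ v % 3 = 1 ∨ v % 3 = 2 := by omega
  all_goals omega

theorem cast_eq_lucas_add_mul_fib {a : ℕ → ℕ} (h1 : a 1 = 1)
    (hrec : ∀ n : ℕ, 1 ≤ n → a (n + 2) = a (n + 1) + a n) :
    ∀ n, (a (n + 1) : ℤ) = lucas (n + 1) + ((a 2 : ℤ) - 3) * Nat.fib n
  | 0 => by simp [h1, lucas]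
  | 1 => by simp [lucas]
  | n + 2 => by
    rw [hrec (n + 1) (by omega), Nat.cast_add, cast_eq_lucas_add_mul_fib h1 hrec (n + 1),
      cast_eq_lucas_add_mul_fib h1 hrec n, Nat.fib_add_two, lucas_add_two (n + 1)]
    push_cast
    ring

theorem two_pow_dvd_sub_three_of_dold {a : ℕ → ℕ} (h1 : a 1 = 1)
    (hrec : ∀ n : ℕ, 1 ≤ n → a (n + 2) = a (n + 1) + a n)
    (hdold : ∀ n : ℕ, 1 ≤ n → (n : ℤ) ∣ doldSum a n) (k : ℕ) :
    (2 : ℤ) ^ (k + 1) ∣ (a 2 : ℤ) - 3 := by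
  obtain ⟨v, hv⟩ : ∃ v, 2 ^ k = v + 1 := Nat.exists_eq_add_one.mpr (Nat.two_pow_pos k)
  have h3 : ¬ 3 ∣ v + 1 := by
    rw [← hv]
    exact fun h => absurd (Nat.prime_three.dvd_of_dvd_pow h) (by norm_num)
  have hcop : IsCoprime ((2 : ℤ) ^ (k + 1)) (Nat.fib (2 * v + 1) - Nat.fib v) :=
    (Int.isCoprime_two_left.mpr (odd_fib_two_mul_add_one_sub_fib h3)).pow_left
  have hv' : 2 ^ (k + 1) = 2 * v + 1 + 1 := by rw [pow_succ, hv]; ring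
  have hdold : (2 : ℤ) ^ (k + 1) ∣ (a (2 * v + 1 + 1) : ℤ) - a (v + 1) := by
    have h := hdold (2 ^ (k + 1)) Nat.one_le_two_pow
    rw [doldSum_prime_pow Nat.prime_two] at h
    push_cast at h
    rwa [hv', hv] at h
  have hlucas : (2 : ℤ) ^ (k + 1) ∣ (lucas (2 * v + 1 + 1) : ℤ) - lucas (v + 1) := by
    have h := lucas_euler_congr Nat.prime_two k 1
    rw [mul_one, mul_one, hv', hv] at h
    exact_mod_cast h
  have hdiff : ((a 2 : ℤ) - 3) * (Nat.fib (2 * v + 1) - Nat.fib v) =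
      ((a (2 * v + 1 + 1) : ℤ) - a (v + 1)) - ((lucas (2 * v + 1 + 1) : ℤ) - lucas (v + 1)) := by
    rw [cast_eq_lucas_add_mul_fib h1 hrec (2 * v + 1), cast_eq_lucas_add_mul_fib h1 hrec v]
    ring
  refine hcop.dvd_of_dvd_mul_right ?_
  rw [hdiff]
  exact dvd_sub hdold hlucas

theorem fibonacci_like_dold_iff_lucas_general (c : ℕ) (a : ℕ → ℕ)
    (h1 : a 1 = 1) (h2 : a 2 = c)
    (hrec : ∀ n : ℕ, 1 ≤ n → a (n + 2) = a (n + 1) + a n) :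
    (∀ n : ℕ, 1 ≤ n → (n : ℤ) ∣ doldSum a n) ↔ c = 3 := by
  subst h2
  constructor
  · intro hdold
    have hdvd := two_pow_dvd_sub_three_of_dold h1 hrec hdold (a 2 + 2)
    have hlt : |(a 2 : ℤ) - 3| < 2 ^ (a 2 + 2 + 1) := by
      have hpow : (a 2 : ℤ) + 2 + 1 < 2 ^ (a 2 + 2 + 1) := by exact_mod_cast Nat.lt_two_pow_self
      rw [abs_lt]
      constructor <;> linarith
    have := Int.eq_zero_of_abs_lt_dvd hdvd hlt
    omega
  · intro h3
    have hlucas : ∀ d ≠ 0, a d = lucas d := by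
      intro d hd
      obtain ⟨d, rfl⟩ := Nat.exists_eq_add_one_of_ne_zero hd
      exact_mod_cast (by simpa [h3] using cast_eq_lucas_add_mul_fib h1 hrec d)
    intro n _
    rw [doldSum_congr hlucas]
    exact dvd_doldSum_lucas n

theorem fibonacci_like_dold_iff_lucas (c : ℕ) (hc : 0 < c) (a : ℕ → ℕ)
    (h1 : a 1 = 1) (h2 : a 2 = c)
    (hrec : ∀ n : ℕ, 1 ≤ n → a (n + 2) = a (n + 1) + a n) :
    (∀ n : ℕ, 1 ≤ n → (n : ℤ) ∣ doldSum a n) ↔ c = 3 :=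
  fibonacci_like_dold_iff_lucas_general c a h1 h2 hrec
end

section
/- If (a_n) is a realizable sequence, then for every k ≥ 1 the sequence (a_{n^k})_{n≥1} is realizable. -/
/-- If `d` divides both `a^k` and `b^k`, then `d` divides `gcd(a,b)^k`. -/
lemma dvd_gcd_pow_aux {k a b d : ℕ} (hd : d ≠ 0) (ha : d ∣ a ^ k) (hb : d ∣ b ^ k) :
    d ∣ Nat.gcd a b ^ k := by
  rcases eq_or_ne a 0 with rfl | ha0
  · simpa using hb
  rcases eq_or_ne b 0 with rfl | hb0
  · simpa using ha
  have hg : Nat.gcd a b ≠ 0 := Nat.gcd_ne_zero_left ha0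
  rw [← Nat.factorization_le_iff_dvd hd (pow_ne_zero _ hg)]
  intro p
  have h1 := (Nat.factorization_le_iff_dvd hd (pow_ne_zero _ ha0)).2 ha p
  have h2 := (Nat.factorization_le_iff_dvd hd (pow_ne_zero _ hb0)).2 hb p
  simp only [Nat.factorization_pow, Finsupp.smul_apply, smul_eq_mul] at h1 h2 ⊢
  rw [Nat.factorization_gcd ha0 hb0, Finsupp.inf_apply]
  rcases le_total (a.factorization p) (b.factorization p) with h | h
  · rwa [inf_eq_left.2 h]
  · rwa [inf_eq_right.2 h]

/-- The least positive integer `m` with `d ∣ m^k`. -/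
noncomputable def kroot (k d : ℕ) : ℕ := sInf {m | 0 < m ∧ d ∣ m ^ k}

lemma kroot_mem {k d : ℕ} (hk : 1 ≤ k) (hd : 0 < d) :
    0 < kroot k d ∧ d ∣ kroot k d ^ k :=
  Nat.sInf_mem (⟨d, hd, dvd_pow_self d (by omega)⟩ : {m | 0 < m ∧ d ∣ m ^ k}.Nonempty)

lemma kroot_dvd {k d : ℕ} (hk : 1 ≤ k) (hd : 0 < d) {n : ℕ} (hn : 0 < n)
    (h : d ∣ n ^ k) : kroot k d ∣ n := by
  obtain ⟨hm, hmk⟩ := kroot_mem hk hd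
  have hg : Nat.gcd (kroot k d) n ∈ {m | 0 < m ∧ d ∣ m ^ k} :=
    ⟨Nat.gcd_pos_of_pos_right _ hn, dvd_gcd_pow_aux (by omega) hmk h⟩
  have h1 : kroot k d ≤ Nat.gcd (kroot k d) n := Nat.sInf_le hg
  have h2 : Nat.gcd (kroot k d) n ∣ kroot k d := Nat.gcd_dvd_left _ _
  have : Nat.gcd (kroot k d) n = kroot k d :=
    le_antisymm (Nat.le_of_dvd hm h2) h1
  rw [← this]; exact Nat.gcd_dvd_right _ _

lemma kroot_dvd_iff {k d : ℕ} (hk : 1 ≤ k) (hd : 0 < d) {n : ℕ} (hn : 0 < n) :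
    kroot k d ∣ n ↔ d ∣ n ^ k := by
  constructor
  · intro h
    exact (kroot_mem hk hd).2.trans (pow_dvd_pow_of_dvd h k)
  · exact kroot_dvd hk hd hn

lemma kroot_dvd_self {k d : ℕ} (hk : 1 ≤ k) (hd : 0 < d) : kroot k d ∣ d :=
  kroot_dvd hk hd hd (dvd_pow_self d (by omega))

theorem realizable_powers (a : ℕ → ℕ) (ha : IsRealizable a) :
    ∀ k : ℕ, 1 ≤ k → IsRealizable (fun n => a (n ^ k)) := by
  intro k hk
  obtain ⟨X, T, hT⟩ := ha
  classical
  set S : X → X := fun x =>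
    if 0 < Function.minimalPeriod T x then
      T^[Function.minimalPeriod T x / kroot k (Function.minimalPeriod T x)] x
    else T x with hS
  -- every step of S is at least one step of T
  have step : ∀ y : X, ∃ e, 1 ≤ e ∧ S y = T^[e] y := by
    intro y
    by_cases hy : 0 < Function.minimalPeriod T y
    · refine ⟨Function.minimalPeriod T y / kroot k (Function.minimalPeriod T y), ?_, ?_⟩
      · have h1 := kroot_dvd_self hk hy
        have h2 := (kroot_mem hk hy).1
        exact Nat.le_div_iff_mul_le h2 |>.2 (by simpa using Nat.le_of_dvd hy h1)
      · simp [hS, if_pos hy]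
    · exact ⟨1, le_refl 1, by simp [hS, if_neg hy]⟩
  have stepIter : ∀ (j : ℕ) (y : X), ∃ c, j ≤ c ∧ S^[j] y = T^[c] y := by
    intro j
    induction j with
    | zero => exact fun y => ⟨0, le_refl 0, rfl⟩
    | succ j ih =>
      intro y
      obtain ⟨c, hc, hcy⟩ := ih y
      obtain ⟨e, he, hey⟩ := step (T^[c] y)
      exact ⟨e + c, by omega, by
        rw [Function.iterate_succ_apply', hcy, hey, ← Function.iterate_add_apply]⟩
  -- on periodic points, S^[j] = T^[j * s]
  have iter_per : ∀ (x : X), x ∈ Function.periodicPts T → ∀ j : ℕ,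
      S^[j] x = T^[j * (Function.minimalPeriod T x / kroot k (Function.minimalPeriod T x))] x := by
    intro x hx j
    induction j with
    | zero => simp
    | succ j ih =>
      rw [Function.iterate_succ_apply', ih]
      set d := Function.minimalPeriod T x with hd
      have hdpos : 0 < d := Function.minimalPeriod_pos_of_mem_periodicPts hx
      set s := d / kroot k d with hs
      have hper : Function.minimalPeriod T (T^[j * s] x) = d :=
        Function.minimalPeriod_apply_iterate hx (j * s)
      have : S (T^[j * s] x) = T^[s] (T^[j * s] x) := by
        simp only [hS, hper]
        rw [if_pos hdpos]
      rw [this, ← Function.iterate_add_apply]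
      ring_nf
  refine ⟨X, S, fun n hn => ?_⟩
  have hnk : 1 ≤ n ^ k := Nat.one_le_pow _ _ (by omega)
  have seteq : {x : X | S^[n] x = x} = {x : X | T^[n ^ k] x = x} := by
    ext x
    simp only [Set.mem_setOf_eq]
    by_cases hx : x ∈ Function.periodicPts T
    · set d := Function.minimalPeriod T x with hd
      have hdpos : 0 < d := Function.minimalPeriod_pos_of_mem_periodicPts hx
      set m := kroot k d with hm
      set s := d / m with hs
      have hmpos : 0 < m := (kroot_mem hk hdpos).1
      have hms : m * s = d := Nat.mul_div_cancel' (kroot_dvd_self hk hdpos)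
      have hspos : 0 < s :=
        Nat.div_pos (Nat.le_of_dvd hdpos (kroot_dvd_self hk hdpos)) hmpos
      rw [iter_per x hx n]
      have h1 : T^[n * s] x = x ↔ d ∣ n * s := by
        constructor
        · intro h; exact Function.IsPeriodicPt.minimalPeriod_dvd h
        · intro h
          exact (Function.isPeriodicPt_iff_minimalPeriod_dvd.2 h :)
      have h2 : T^[n ^ k] x = x ↔ d ∣ n ^ k := by
        constructor
        · intro h; exact Function.IsPeriodicPt.minimalPeriod_dvd h
        · intro h
          exact (Function.isPeriodicPt_iff_minimalPeriod_dvd.2 h :)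
      rw [h1, h2, ← hms]
      rw [Nat.mul_dvd_mul_iff_right hspos]
      rw [hm, kroot_dvd_iff hk hdpos (by omega)]
      rw [hms]
    · constructor
      · intro h
        obtain ⟨c, hc, hcy⟩ := stepIter n x
        rw [hcy] at h
        exact absurd (Function.mk_mem_periodicPts (by omega) h) hx
      · intro h
        exact absurd (Function.mk_mem_periodicPts (by omega) h) hx
  rw [seteq]
  exact hT (n ^ k) hnk
end

section
/- The sequence (a_n) with a_n = 6 if 5 | n and a_n = 1 otherwise is realizable (it is realized by the permutation (1 2 3 4 5)(6) of a 6-element set), is a divisibility sequence (a_m | a_n whenever m | n), and satisfies a linear recurrence; but there is no group G of order 6 with an automorphism φ such that a_n = #{g ∈ G : φ^n(g) = g} for all n ≥ 1. -/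
theorem cycle_example_not_algebraically_realizable
    (a : ℕ → ℕ) (ha : ∀ n : ℕ, a n = if 5 ∣ n then 6 else 1) :
    IsRealizable a ∧
    (∀ m n : ℕ, 1 ≤ m → m ∣ n → a m ∣ a n) ∧
    (∃ k : ℕ, 1 ≤ k ∧ ∃ c : Fin k → ℤ,
      ∀ n : ℕ, 1 ≤ n → (a (n + k) : ℤ) = ∑ i : Fin k, c i * (a (n + i) : ℤ)) ∧
    ¬ ∃ (G : Type) (_ : Group G) (_ : Fintype G), Fintype.card G = 6 ∧
        ∃ φ : G ≃* G, ∀ n : ℕ, 1 ≤ n → {g : G | (φ ^ n) g = g}.ncard = a n := by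
  refine ⟨?_, ?_, ?_, ?_⟩
  · -- Realizability: a 5-cycle plus a fixed point
    refine ⟨(ZMod 5) ⊕ Unit, Sum.map (· + 1) id, fun n hn => ?_⟩
    have hit : ∀ n : ℕ, (Sum.map (fun x : ZMod 5 => x + 1) (id : Unit → Unit))^[n]
        = Sum.map (fun x => x + (n : ZMod 5)) id := by
      intro n
      induction n with
      | zero => simp [Function.iterate_zero]; ext x; cases x <;> simp
      | succ k ih =>
        ext x
        rw [Function.iterate_succ', Function.comp_apply, ih]
        cases x <;> simp [add_assoc]
    refine ⟨Set.toFinite _, ?_⟩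
    rw [hit, ha]
    by_cases h5 : 5 ∣ n
    · have hz : (n : ZMod 5) = 0 := (ZMod.natCast_eq_zero_iff n 5).2 h5
      have : {x : ZMod 5 ⊕ Unit | Sum.map (fun x => x + (n : ZMod 5)) id x = x} = Set.univ := by
        ext x; cases x <;> simp [hz]
      rw [this, if_pos h5, Set.ncard_univ]
      simp [Nat.card_eq_fintype_card]
    · have hz : (n : ZMod 5) ≠ 0 := fun h => h5 ((ZMod.natCast_eq_zero_iff n 5).1 h)
      have : {x : ZMod 5 ⊕ Unit | Sum.map (fun x => x + (n : ZMod 5)) id x = x}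
          = {Sum.inr ()} := by
        ext x; cases x with
        | inl y => simp [hz]
        | inr u => simp
      rw [this, if_neg h5, Set.ncard_singleton]
  · -- Divisibility sequence
    intro m n _ hmn
    rw [ha, ha]
    by_cases h : 5 ∣ m
    · rw [if_pos h, if_pos (h.trans hmn)]
    · rw [if_neg h]; exact one_dvd _
  · -- Linear recurrence: period 5
    refine ⟨5, by norm_num, fun i => if i = 0 then 1 else 0, fun n hn => ?_⟩
    rw [Fin.sum_univ_five]
    simp only [ha]
    have : (5 ∣ n + 5) ↔ 5 ∣ n := by omega
    rcases em (5 ∣ n) with h | h <;> simp [this, h]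
  · -- Not algebraically realizable
    rintro ⟨G, _, _, hcard, φ, hφ⟩
    classical
    have h5' := hφ 5 (by norm_num)
    rw [ha] at h5'
    norm_num at h5'
    have huniv : {g : G | (φ ^ 5) g = g} = Set.univ :=
      Set.eq_of_subset_of_ncard_le (Set.subset_univ _)
        (by rw [Set.ncard_univ, Nat.card_eq_fintype_card, hcard, h5']) (Set.finite_univ)
    have h5 : ∀ g : G, (φ ^ 5) g = g := fun g => by
      have : g ∈ {g : G | (φ ^ 5) g = g} := huniv ▸ Set.mem_univ g
      exact this
    have hΦ5 : φ ^ 5 = 1 := by ext g; exact h5 g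
    have h1' := hφ 1 le_rfl
    rw [ha] at h1'
    norm_num [Set.ncard_eq_one] at h1'
    obtain ⟨w, hw⟩ := h1'
    have hfix : ∀ g : G, φ g = g → g = 1 := by
      have h1mem : (1 : G) ∈ {g : G | φ g = g} := by simp
      rw [hw] at h1mem
      intro g hg
      have hg' : g ∈ {g : G | φ g = g} := hg
      rw [hw] at hg'
      simp at hg' h1mem
      rw [hg', ← h1mem]
    have hiter : ∀ (ψ : G ≃* G) (g : G), ψ g = g → ∀ m : ℕ, (ψ ^ m) g = g := by
      intro ψ g hg m
      induction m with
      | zero => simp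
      | succ k ih => rw [pow_succ, MulAut.mul_apply, hg, ih]
    have hkey : ∀ d : ℕ, 0 < d → d < 5 → ∀ g : G, (φ ^ d) g = g → φ g = g := by
      intro d hd0 hd5 g hg
      have step : ∀ e q : ℕ, d * e = 5 * q + 1 → φ g = g := by
        intro e q he
        have h1 : ((φ ^ d) ^ e) g = g := hiter _ _ hg e
        rw [← pow_mul, he, pow_add, pow_mul, hΦ5, one_pow, one_mul, pow_one] at h1
        exact h1
      interval_cases d
      · exact step 1 0 rfl
      · exact step 3 1 rfl
      · exact step 2 1 rfl
      · exact step 4 3 rfl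
    obtain ⟨x, hx⟩ := exists_prime_orderOf_dvd_card (G := G) 2 (by rw [hcard]; norm_num)
    obtain ⟨y, hy⟩ := exists_prime_orderOf_dvd_card (G := G) 3 (by rw [hcard]; norm_num)
    have hx1 : x ≠ 1 := by intro h; rw [h, orderOf_one] at hx; norm_num at hx
    have hy1 : y ≠ 1 := by intro h; rw [h, orderOf_one] at hy; norm_num at hy
    set S : Finset G := (Finset.range 5).image (fun i => (φ ^ i) x) with hS
    have hScard : S.card = 5 := by
      rw [hS, Finset.card_image_of_injOn, Finset.card_range]
      have haux : ∀ i j : ℕ, i < j → j < 5 → (φ ^ j) x = (φ ^ i) x → False := by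
        intro i j hlt hj5 hij
        have e1 : (φ ^ i) ((φ ^ (j - i)) x) = (φ ^ i) x := by
          rw [← MulAut.mul_apply, ← pow_add, show i + (j - i) = j by omega, hij]
        have e2 : (φ ^ (j - i)) x = x := (φ ^ i).injective e1
        exact hx1 (hfix x (hkey (j - i) (by omega) (by omega) x e2))
      intro i hi j hj hij
      simp only at hij
      simp only [Finset.coe_range, Set.mem_Iio] at hi hj
      rcases lt_trichotomy i j with h | h | h
      · exact (haux i j h hj hij.symm).elim
      · exact h
      · exact (haux j i h hi hij).elim
    have hSsub : S ⊆ Finset.univ \ {1} := by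
      intro g hg
      rw [hS] at hg
      simp only [Finset.mem_image, Finset.mem_range] at hg
      obtain ⟨i, _, rfl⟩ := hg
      simp only [Finset.mem_sdiff, Finset.mem_univ, Finset.mem_singleton, true_and]
      intro h
      have : (φ ^ i) x = (φ ^ i) 1 := by rw [h, map_one]
      exact hx1 ((φ ^ i).injective this)
    have hcompl : (Finset.univ \ ({1} : Finset G)).card = 5 := by
      rw [Finset.card_sdiff_of_subset (by simp), Finset.card_univ, hcard, Finset.card_singleton]
    have hSeq : S = Finset.univ \ {1} :=
      Finset.eq_of_subset_of_card_le hSsub (by rw [hScard, hcompl])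
    have hyS : y ∈ S := by rw [hSeq]; simp [hy1]
    rw [hS] at hyS
    simp only [Finset.mem_image, Finset.mem_range] at hyS
    obtain ⟨i, _, hi⟩ := hyS
    have : orderOf y = orderOf x := by
      rw [← hi]
      exact orderOf_injective (φ ^ i : G ≃* G).toMonoidHom (φ ^ i).injective x
    rw [hy, hx] at this
    norm_num at this
end

section
/- If a sequence (a_n) of positive integers is locally realizable at every prime p (i.e., for every prime p the sequence of p-parts (|a_n|_p^{-1})_{n≥1} is realizable), then (a_n) is realizable. -/
section PiCard

variable {ι : Type*} {β : ι → Type*}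

theorem Finite.pi_of_hasFiniteMulSupport [∀ i, Finite (β i)]
    (h : Function.HasFiniteMulSupport fun i => Nat.card (β i)) :
    Finite (∀ i, β i) := by
  classical
  set s := Function.mulSupport fun i => Nat.card (β i)
  have : Finite s := h.to_subtype
  have : ∀ i : {i // i ∉ s}, Subsingleton (β i) :=
    fun i => Finite.card_le_one_iff_subsingleton.mp (Function.notMem_mulSupport.mp i.2).le
  exact .of_equiv _ (Equiv.piEquivPiSubtypeProd (· ∈ s) β).symm

theorem Nat.card_pi_eq_finprod (h : Function.HasFiniteMulSupport fun i => Nat.card (β i)) :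
    Nat.card (∀ i, β i) = ∏ᶠ i, Nat.card (β i) := by
  classical
  set s := Function.mulSupport fun i => Nat.card (β i)
  have : Fintype s := h.fintype
  have hone : ∀ i : {i // i ∉ s}, Subsingleton (β i) ∧ Nonempty (β i) :=
    fun i => Nat.card_eq_one_iff_unique.mp (Function.notMem_mulSupport.mp i.2)
  have : ∀ i : {i // i ∉ s}, Subsingleton (β i) := fun i => (hone i).1
  have : ∀ i : {i // i ∉ s}, Nonempty (β i) := fun i => (hone i).2
  rw [Nat.card_congr (Equiv.piEquivPiSubtypeProd (· ∈ s) β), Nat.card_prod,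
    Nat.card_unique (α := ∀ i : {i // i ∉ s}, β i),
    mul_one, Nat.card_pi, ← finprod_eq_prod_of_fintype]
  exact (finprod_set_coe_eq_finprod_mem (f := fun i => Nat.card (β i)) s).trans
    (finprod_mem_mulSupport _)

end PiCard

theorem setOf_iterate_piMap_eq_pi {ι : Type*} {X : ι → Type*} (T : ∀ i, X i → X i) (n : ℕ) :
    {x | (Pi.map T)^[n] x = x} = Set.univ.pi fun i => {y | (T i)^[n] y = y} := by
  ext x
  simp [funext_iff]

theorem Nat.mulSupport_pow_factorization_subset (n : ℕ) :
    (Function.mulSupport fun p => p ^ n.factorization p) ⊆ n.primeFactors := by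
  intro p hp
  rw [Finset.mem_coe, ← Nat.support_factorization, Finsupp.mem_support_iff]
  rintro h
  simp [h] at hp

theorem Nat.hasFiniteMulSupport_pow_factorization (n : ℕ) :
    Function.HasFiniteMulSupport fun p : {p : ℕ // p.Prime} => (p : ℕ) ^ n.factorization p :=
  (n.primeFactors.finite_toSet.subset (Nat.mulSupport_pow_factorization_subset n)).preimage
    Subtype.val_injective.injOn

theorem Nat.finprod_pow_factorization {n : ℕ} (hn : n ≠ 0) :
    ∏ᶠ p : {p : ℕ // p.Prime}, (p : ℕ) ^ n.factorization p = n := by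
  calc ∏ᶠ p : {p : ℕ // p.Prime}, (p : ℕ) ^ n.factorization p
      = ∏ᶠ (p) (_ : p.Prime), p ^ n.factorization p :=
        finprod_subtype_eq_finprod_cond (f := fun p => p ^ n.factorization p) _
    _ = ∏ᶠ p, p ^ n.factorization p := finprod_congr fun p => by
        by_cases hp : p.Prime
        · simp [hp]
        · simp [hp, Nat.factorization_eq_zero_of_not_prime]
    _ = ∏ p ∈ n.primeFactors, p ^ n.factorization p :=
        finprod_eq_prod_of_mulSupport_subset _ (Nat.mulSupport_pow_factorization_subset n)
    _ = n := Nat.prod_factorization_pow_eq_self hn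

theorem IsRealizable.congr {a b : ℕ → ℕ} (ha : IsRealizable a) (h : ∀ n, 1 ≤ n → a n = b n) :
    IsRealizable b := by
  obtain ⟨X, T, hT⟩ := ha
  exact ⟨X, T, fun n hn => h n hn ▸ hT n hn⟩

theorem IsRealizable.finprod {ι : Type} {b : ι → ℕ → ℕ} (hb : ∀ i, IsRealizable (b i))
    (hfin : ∀ n, 1 ≤ n → Function.HasFiniteMulSupport fun i => b i n) :
    IsRealizable fun n => ∏ᶠ i, b i n := by
  choose X T hT using hb
  refine ⟨∀ i, X i, Pi.map T, fun n hn => ?_⟩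
  have : ∀ i, Finite {y | (T i)^[n] y = y} := fun i => (hT i n hn).1.to_subtype
  have hcard : ∀ i, Nat.card {y | (T i)^[n] y = y} = b i n := fun i =>
    (Nat.card_coe_set_eq _).trans (hT i n hn).2
  have hsupp : Function.HasFiniteMulSupport fun i => Nat.card {y | (T i)^[n] y = y} := by
    simpa only [hcard] using hfin n hn
  rw [setOf_iterate_piMap_eq_pi, ← Set.finite_coe_iff, ← Nat.card_coe_set_eq,
    Nat.card_congr (Equiv.Set.univPi _), Nat.card_pi_eq_finprod hsupp]
  have := Finite.pi_of_hasFiniteMulSupport hsupp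
  exact ⟨.of_equiv _ (Equiv.Set.univPi _).symm, finprod_congr hcard⟩

theorem realizable_of_locally_realizable (a : ℕ → ℕ) (hpos : ∀ n : ℕ, 1 ≤ n → 0 < a n)
    (hloc : ∀ p : ℕ, p.Prime → IsRealizable (fun n => p ^ (a n).factorization p)) :
    IsRealizable a := by
  have hprod : ∀ n, 1 ≤ n → ∏ᶠ p : {p : ℕ // p.Prime}, (p : ℕ) ^ (a n).factorization p = a n :=
    fun n hn => Nat.finprod_pow_factorization (hpos n hn).ne'
  exact (IsRealizable.finprod (fun p : {p : ℕ // p.Prime} => hloc p p.2)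
    fun n _ => Nat.hasFiniteMulSupport_pow_factorization (a n)).congr hprod
end

section
/- For j odd, the set of primes p for which there exists n ≥ 1 with v_p(∑_{d|n} μ(n/d) F_{d^j}) < v_p(n) is infinite; consequently (C F_{n^j}) fails the Dold condition for every positive integer constant C, i.e., (F_{n^j}) is not almost realizable. -/
/-!
If `5` is not a square mod `p`, the Frobenius of `𝔽_p[α]`, `α² = α + 1`, swaps `α` with its
conjugate `1 - α`, so `α ^ p ^ j = 1 - α` for odd `j`. Comparing with
`α ^ (n + 1) = F_{n+1} α + F_n` in the basis `1, α` gives `F_{p^j} ≡ -1 (mod p)`, so the Dold sum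
`F_{p^j} - F_1` at `n = p` is `≡ -2 (mod p)`. By quadratic reciprocity this applies to every prime
`p ≡ 3 (mod 5)`, of which there are infinitely many by Dirichlet's theorem; choosing `p > C`
defeats every constant `C`.
-/

open Polynomial

lemma doldSum_prime (a : ℕ → ℕ) {p : ℕ} (hp : p.Prime) : doldSum a p = a p - a 1 := by
  rw [doldSum, hp.divisors, Finset.sum_pair hp.one_lt.ne, Nat.div_one, Nat.div_self hp.pos,
    ArithmeticFunction.moebius_apply_prime hp, ArithmeticFunction.moebius_apply_one]
  ring

lemma pow_succ_eq_fib_mul_add_fib {R : Type*} [CommRing R] {α : R} (hα : α ^ 2 = α + 1)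
    (n : ℕ) : α ^ (n + 1) = Nat.fib (n + 1) * α + Nat.fib n := by
  induction n with
  | zero => simp
  | succ n ih =>
    rw [pow_succ, ih, Nat.fib_add_two]
    push_cast
    linear_combination (Nat.fib (n + 1) : R) * hα

lemma AdjoinRoot.of_mul_root_add_of_eq_zero_iff {K : Type*} [CommRing K] [IsDomain K]
    {f : K[X]} (hf : 1 < f.degree) {a b : K} :
    of f a * root f + of f b = 0 ↔ a = 0 ∧ b = 0 := by
  refine ⟨fun h => ?_, fun ⟨ha, hb⟩ => by simp [ha, hb]⟩
  have hdvd : f ∣ C a * X + C b := by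
    rw [← mk_eq_zero]
    simpa only [map_add, map_mul, mk_C, mk_X] using h
  have hzero := eq_zero_of_dvd_of_degree_lt hdvd (degree_linear_le.trans_lt hf)
  exact ⟨by simpa using congrArg (coeff · 1) hzero, by simpa using congrArg (coeff · 0) hzero⟩

lemma ne_two_of_not_isSquare_five {p : ℕ} (h5 : ¬IsSquare (5 : ZMod p)) : p ≠ 2 := by
  rintro rfl
  exact h5 ⟨1, by decide⟩

lemma not_isSquare_five_of_natCast_eq_three {p : ℕ} [Fact p.Prime] (h3 : (p : ZMod 5) = 3) :
    ¬IsSquare (5 : ZMod p) := by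
  have three_not_square : ¬IsSquare (3 : ZMod 5) := by decide
  have hp2 : p ≠ 2 := by
    rintro rfl
    exact absurd h3 (by decide)
  have : Fact (Nat.Prime 5) := ⟨by norm_num⟩
  have reciprocity := ZMod.exists_sq_eq_prime_iff_of_mod_four_eq_one (p := 5) (by norm_num) hp2
  rw [Nat.cast_ofNat, h3] at reciprocity
  exact fun h => three_not_square (reciprocity.mpr h)

section CharP

variable {p : ℕ} [Fact p.Prime] {R : Type*} [CommRing R] [CharP R p]

/-- `β = 2α - 1` is a square root of `5`, so Euler's criterion gives `β ^ p = -β`. -/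
lemma pow_char_eq_one_sub_of_sq_eq_add_one (h5 : ¬IsSquare (5 : ZMod p)) {α : R}
    (hα : α ^ 2 = α + 1) : α ^ p = 1 - α := by
  have hp : p.Prime := Fact.out
  have hp2 : p ≠ 2 := ne_two_of_not_isSquare_five h5
  have h5ne : (5 : ZMod p) ≠ 0 := fun h => h5 ⟨0, by rw [h]; ring⟩
  have euler : (5 : ZMod p) ^ (p / 2) = -1 :=
    (ZMod.pow_div_two_eq_neg_one_or_one p h5ne).resolve_left
      fun h => h5 ((ZMod.euler_criterion p h5ne).mpr h)
  have euler_R : (5 : R) ^ (p / 2) = -1 := by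
    simpa only [map_pow, map_neg, map_one, map_ofNat] using
      congrArg (ZMod.castHom (dvd_refl p) R) euler
  have hp_odd : 2 * (p / 2) + 1 = p := by
    have := Nat.odd_iff.mp (hp.odd_of_ne_two hp2)
    omega
  have hβ : (2 * α - 1) ^ p = -(2 * α - 1) :=
    calc (2 * α - 1) ^ p = ((2 * α - 1) ^ 2) ^ (p / 2) * (2 * α - 1) := by
          rw [← pow_mul, ← pow_succ, hp_odd]
      _ = (5 : R) ^ (p / 2) * (2 * α - 1) := by congr 2; linear_combination 4 * hα
      _ = -(2 * α - 1) := by rw [euler_R]; ring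
  have h2 : (2 : R) ^ p = 2 := by rw [← one_add_one_eq_two, add_pow_char, one_pow]
  have h2_unit : IsUnit (2 : R) := by
    exact_mod_cast (CharP.isUnit_natCast_iff hp).mpr
      fun h => hp2 ((Nat.prime_dvd_prime_iff_eq hp Nat.prime_two).mp h)
  rw [sub_pow_char, mul_pow, h2, one_pow] at hβ
  exact h2_unit.mul_left_cancel (by linear_combination hβ)

lemma pow_char_pow_eq_one_sub_of_odd (h5 : ¬IsSquare (5 : ZMod p)) {α : R}
    (hα : α ^ 2 = α + 1) {j : ℕ} (hj : Odd j) : α ^ p ^ j = 1 - α := by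
  have hσ : frobenius R p α = 1 - α := pow_char_eq_one_sub_of_sq_eq_add_one h5 hα
  have hperiodic : Function.IsPeriodicPt (frobenius R p) 2 α := by
    simp [Function.IsPeriodicPt, Function.IsFixedPt, hσ]
  rw [← iterate_frobenius, ← hperiodic.iterate_mod_apply, Nat.odd_iff.mp hj,
    Function.iterate_one, hσ]

end CharP

lemma ZMod.natCast_fib_pow_eq_neg_one {p : ℕ} [Fact p.Prime] (h5 : ¬IsSquare (5 : ZMod p))
    {j : ℕ} (hj : Odd j) : (Nat.fib (p ^ j) : ZMod p) = -1 := by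
  set f : (ZMod p)[X] := X ^ 2 - X - 1
  have hf : f.degree = 2 := by simp only [f]; compute_degree!
  have : CharP (AdjoinRoot f) p :=
    charP_of_injective_algebraMap (AdjoinRoot.of.injective_of_degree_ne_zero (by rw [hf]; decide)) p
  have hα : AdjoinRoot.root f ^ 2 = AdjoinRoot.root f + 1 := by
    have := AdjoinRoot.eval₂_root f
    simp only [f, eval₂_sub, eval₂_pow, eval₂_X, eval₂_one] at this
    linear_combination this
  obtain ⟨n, hn⟩ : ∃ n, p ^ j = n + 1 :=
    Nat.exists_eq_add_one.mpr (pow_pos (Fact.out : p.Prime).pos j)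
  have hfib := pow_succ_eq_fib_mul_add_fib hα n
  rw [← hn, pow_char_pow_eq_one_sub_of_odd h5 hα hj] at hfib
  have hcoord : AdjoinRoot.of f ((Nat.fib (p ^ j) : ZMod p) + 1) * AdjoinRoot.root f
      + AdjoinRoot.of f ((Nat.fib n : ZMod p) - 1) = 0 := by
    simp only [map_add, map_sub, map_one, map_natCast]
    linear_combination -hfib
  exact eq_neg_of_add_eq_zero_left
    ((AdjoinRoot.of_mul_root_add_of_eq_zero_iff (by rw [hf]; decide)).mp hcoord).1

lemma not_dvd_doldSum_fib_pow_of_not_isSquare_five {p : ℕ} [Fact p.Prime]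
    (h5 : ¬IsSquare (5 : ZMod p)) {j : ℕ} (hj : Odd j) :
    ¬(p : ℤ) ∣ doldSum (fun m => Nat.fib (m ^ j)) p := by
  have hp : p.Prime := Fact.out
  rw [← ZMod.intCast_zmod_eq_zero_iff_dvd, doldSum_prime _ hp]
  push_cast
  rw [one_pow, Nat.fib_one, Nat.cast_one, ZMod.natCast_fib_pow_eq_neg_one h5 hj]
  intro h
  have h2 : ((2 : ℕ) : ZMod p) = 0 := by push_cast; linear_combination -h
  rw [ZMod.natCast_eq_zero_iff] at h2
  exact ne_two_of_not_isSquare_five h5 ((Nat.prime_dvd_prime_iff_eq hp Nat.prime_two).mp h2)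

theorem fib_odd_powers_not_almost_realizable (j : ℕ) (hj : Odd j) :
    {p : ℕ | p.Prime ∧ ∃ n : ℕ, 1 ≤ n ∧
        ¬ ((p : ℤ) ^ (padicValNat p n) ∣ doldSum (fun m => Nat.fib (m ^ j)) n)}.Infinite ∧
    ∀ C : ℕ, 0 < C → ∃ n : ℕ, 1 ≤ n ∧
      ¬ (n : ℤ) ∣ (C : ℤ) * doldSum (fun m => Nat.fib (m ^ j)) n := by
  set S := {p : ℕ | p.Prime ∧ (p : ZMod 5) = 3}
  have hS : S.Infinite := Nat.infinite_setOfPred_prime_and_eq_mod (by decide)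
  have key : ∀ p ∈ S, ¬(p : ℤ) ∣ doldSum (fun m => Nat.fib (m ^ j)) p := by
    rintro p ⟨hp, h3⟩
    have := Fact.mk hp
    exact not_dvd_doldSum_fib_pow_of_not_isSquare_five (not_isSquare_five_of_natCast_eq_three h3) hj
  refine ⟨hS.mono fun p hpS => ⟨hpS.1, p, hpS.1.one_lt.le, ?_⟩, fun C hC => ?_⟩
  · rw [padicValNat.self hpS.1.one_lt, pow_one]
    exact key p hpS
  · obtain ⟨p, hpS, hCp⟩ := hS.exists_gt C
    refine ⟨p, hpS.1.one_lt.le, fun h => ?_⟩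
    rcases (Nat.prime_iff_prime_int.mp hpS.1).dvd_mul.mp h with hpC | hpD
    · exact absurd (Nat.le_of_dvd hC (Int.natCast_dvd_natCast.mp hpC)) (by omega)
    · exact key p hpS hpD
end
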